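/- Let A ∈ ℂ^{m×n} have rows a_1ᴴ,…,a_mᴴ with ‖a_r‖₂ = 1 for all r, let x̂ ∈ ℂ^n, and let y ∈ ℝ^m with y_r = |⟨a_r, x̂⟩|². Let σ > 0 satisfy ‖A v‖₂ ≥ σ‖v‖₂ for all v ∈ ℂ^n. Fix x_0 ∈ ℂ^n and for each finite index sequence (r_1,…,r_l) ∈ {1,…,m}^l define iterates by x_k = x_{k−1} + (√(y_{r_k})·phase(⟨a_{r_k}, x_{k−1}⟩) − ⟨a_{r_k}, x_{k−1}⟩)·a_{r_k} for k = 1,…,l, and write x_l^{(r_1,…,r_l)} for the final iterate. Then for every l ≥ 0, (1/m^l) Σ_{(r_1,…,r_l) ∈ {1,…,m}^l} dist²(x_l^{(r_1,…,r_l)}, x̂) ≤ (1 − σ²/m)^l · dist²(x_0, x̂) + (4m/σ²)·max_{1≤r≤m} y_r. (Convergence of the randomized simple Kaczmarz method for phase retrieval with uniform row selection: the expectation equals the uniform average over index sequences.) -/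

import Mathlib

open scoped BigOperators ComplexConjugate

/-- phase(w) = w/|w| if w ≠ 0, else 1. -/
noncomputable def phase (w : ℂ) : ℂ := if w = 0 then 1 else w / (‖w‖ : ℂ)

/-- Euclidean norm of a complex vector. -/
noncomputable def evnorm {ι : Type*} [Fintype ι] (v : ι → ℂ) : ℝ :=
  Real.sqrt (∑ i, ‖v i‖ ^ 2)

/-- Euclidean norm of a real vector. -/
noncomputable def rvnorm {ι : Type*} [Fintype ι] (v : ι → ℝ) : ℝ :=
  Real.sqrt (∑ i, (v i) ^ 2)

/-- Standard Hermitian inner product, conjugate-linear in the first argument. -/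
noncomputable def hinner {n : ℕ} (a x : Fin n → ℂ) : ℂ := ∑ i, conj (a i) * x i

/-- dist(x, x̂) = min over unimodular ω of ‖x − ω·x̂‖₂. -/
noncomputable def pdist {n : ℕ} (x xhat : Fin n → ℂ) : ℝ :=
  ⨅ ω : {ω : ℂ // ‖ω‖ = 1}, evnorm (x - (ω : ℂ) • xhat)

/-- Operator (spectral) norm of a complex matrix w.r.t. Euclidean norms. -/
noncomputable def matOpNorm {ι κ : Type*} [Fintype ι] [Fintype κ] [DecidableEq κ]
    (M : Matrix ι κ ℂ) : ℝ :=
  ‖LinearMap.toContinuousLinearMap (Matrix.toEuclideanLin M)‖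

/-!
Fix a unimodular `ω` attaining `dist(x, x̂)` and put `u = x - ω x̂`. A Kaczmarz step along a unit
row `a` only changes the component of `u` along `a`, replacing `⟪a, u⟫` by a coefficient of modulus
at most `2 |⟪a, x̂⟫|`; hence `dist²(x⁺, x̂) ≤ ‖u‖² - |⟪a, u⟫|² + 4 y`. Averaging over the rows and
using `∑ r, |⟪a r, u⟫|² ≥ σ² ‖u‖²` contracts the mean squared distance by `1 - σ² / m` up to an
additive `4 max y`, and iterating sums a geometric series bounded by `m / σ²`.
-/

open scoped InnerProductSpace

section Projection

variable {E : Type*} [NormedAddCommGroup E] [InnerProductSpace ℂ E]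

lemma norm_add_smul_sub_inner_sq {a : E} (ha : ‖a‖ = 1) (u : E) (c : ℂ) :
    ‖u + (c - ⟪a, u⟫_ℂ) • a‖ ^ 2 = ‖u‖ ^ 2 - ‖⟪a, u⟫_ℂ‖ ^ 2 + ‖c‖ ^ 2 := by
  rw [@norm_add_sq ℂ, inner_smul_right, ← inner_conj_symm, norm_smul, ha, mul_one]
  simp only [Complex.sq_norm, Complex.normSq_apply, Complex.mul_re, Complex.sub_re,
    Complex.sub_im, Complex.conj_re, Complex.conj_im, RCLike.re_to_complex]
  ring

lemma norm_phase (w : ℂ) : ‖phase w‖ = 1 := by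
  unfold phase
  split_ifs with h
  · simp
  · rw [norm_div, Complex.norm_real, norm_norm, div_self (norm_ne_zero_iff.mpr h)]

lemma norm_kaczmarz_step_sub_sq_le {a : E} (ha : ‖a‖ = 1) (x xhat : E) {ω : ℂ} (hω : ‖ω‖ = 1) :
    ‖x + ((‖⟪a, xhat⟫_ℂ‖ : ℂ) * phase ⟪a, x⟫_ℂ - ⟪a, x⟫_ℂ) • a - ω • xhat‖ ^ 2 ≤
      ‖x - ω • xhat‖ ^ 2 - ‖⟪a, x - ω • xhat⟫_ℂ‖ ^ 2 + 4 * ‖⟪a, xhat⟫_ℂ‖ ^ 2 := by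
  set c : ℂ := ‖⟪a, xhat⟫_ℂ‖ * phase ⟪a, x⟫_ℂ - ω * ⟪a, xhat⟫_ℂ
  have hvec : x + ((‖⟪a, xhat⟫_ℂ‖ : ℂ) * phase ⟪a, x⟫_ℂ - ⟪a, x⟫_ℂ) • a - ω • xhat =
      (x - ω • xhat) + (c - ⟪a, x - ω • xhat⟫_ℂ) • a := by
    rw [inner_sub_right, inner_smul_right]
    module
  have hc : ‖c‖ ≤ 2 * ‖⟪a, xhat⟫_ℂ‖ := by
    calc ‖c‖ ≤ ‖(‖⟪a, xhat⟫_ℂ‖ : ℂ) * phase ⟪a, x⟫_ℂ‖ + ‖ω * ⟪a, xhat⟫_ℂ‖ := norm_sub_le _ _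
      _ = 2 * ‖⟪a, xhat⟫_ℂ‖ := by
        rw [norm_mul, norm_mul, norm_phase, hω, Complex.norm_real, norm_norm]; ring
  rw [hvec, norm_add_smul_sub_inner_sq ha]
  nlinarith [norm_nonneg c]

end Projection

section Coordinates

variable {n : ℕ}

lemma evnorm_sq {ι : Type*} [Fintype ι] (v : ι → ℂ) : evnorm v ^ 2 = ∑ i, ‖v i‖ ^ 2 :=
  Real.sq_sqrt (Finset.sum_nonneg fun _ _ => sq_nonneg _)

lemma evnorm_eq_norm_toLp (v : Fin n → ℂ) :
    evnorm v = ‖(WithLp.toLp 2 v : EuclideanSpace ℂ (Fin n))‖ := by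
  rw [EuclideanSpace.norm_eq]; rfl

lemma hinner_eq_inner_toLp (a x : Fin n → ℂ) :
    hinner a x = ⟪(WithLp.toLp 2 a : EuclideanSpace ℂ (Fin n)), WithLp.toLp 2 x⟫_ℂ := by
  simp [hinner, PiLp.inner_apply, mul_comm]

lemma pdist_nonneg (x xhat : Fin n → ℂ) : 0 ≤ pdist x xhat :=
  Real.iInf_nonneg fun _ => Real.sqrt_nonneg _

lemma pdist_le_evnorm (x xhat : Fin n → ℂ) {ω : ℂ} (hω : ‖ω‖ = 1) :
    pdist x xhat ≤ evnorm (x - ω • xhat) :=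
  ciInf_le ⟨0, Set.forall_mem_range.2 fun _ => Real.sqrt_nonneg _⟩ (⟨ω, hω⟩ : {ω : ℂ // ‖ω‖ = 1})

lemma pdist_self (x : Fin n → ℂ) : pdist x x = 0 :=
  le_antisymm (by simpa [evnorm] using pdist_le_evnorm x x norm_one) (pdist_nonneg x x)

lemma exists_pdist_eq_evnorm (x xhat : Fin n → ℂ) :
    ∃ ω : ℂ, ‖ω‖ = 1 ∧ pdist x xhat = evnorm (x - ω • xhat) := by
  have hcont : Continuous fun ω : ℂ => evnorm (x - ω • xhat) := by
    simp only [evnorm_eq_norm_toLp, WithLp.toLp_sub, WithLp.toLp_smul]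
    fun_prop
  obtain ⟨ω₀, hω₀, hmin⟩ := (isCompact_sphere (0 : ℂ) 1).exists_isMinOn
    (NormedSpace.sphere_nonempty.2 zero_le_one) hcont.continuousOn
  have hω₀ : ‖ω₀‖ = 1 := by simpa using hω₀
  have : Nonempty {ω : ℂ // ‖ω‖ = 1} := ⟨⟨ω₀, hω₀⟩⟩
  refine ⟨ω₀, hω₀, le_antisymm (pdist_le_evnorm _ _ hω₀) (le_ciInf fun ω => hmin ?_)⟩
  simpa using ω.2

lemma pdist_kaczmarz_step_sq_le {a : Fin n → ℂ} (ha : evnorm a = 1) (x xhat : Fin n → ℂ)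
    {ω : ℂ} (hω : ‖ω‖ = 1) :
    pdist (x + ((‖hinner a xhat‖ : ℂ) * phase (hinner a x) - hinner a x) • a) xhat ^ 2 ≤
      evnorm (x - ω • xhat) ^ 2 - ‖hinner a (x - ω • xhat)‖ ^ 2 + 4 * ‖hinner a xhat‖ ^ 2 := by
  refine (pow_le_pow_left₀ (pdist_nonneg _ _) (pdist_le_evnorm _ _ hω) 2).trans ?_
  rw [evnorm_eq_norm_toLp] at ha ⊢
  simp only [hinner_eq_inner_toLp, evnorm_eq_norm_toLp, WithLp.toLp_sub, WithLp.toLp_add,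
    WithLp.toLp_smul] at ha ⊢
  exact norm_kaczmarz_step_sub_sq_le ha _ _ hω

end Coordinates

section LowerFrameBound

variable {m n : ℕ} {a : Fin m → Fin n → ℂ} {σ : ℝ}

lemma sq_mul_evnorm_sq_le_sum (hσ : 0 ≤ σ)
    (hsing : ∀ v : Fin n → ℂ, σ * evnorm v ≤ evnorm (fun r => hinner (a r) v)) (v : Fin n → ℂ) :
    σ ^ 2 * evnorm v ^ 2 ≤ ∑ r, ‖hinner (a r) v‖ ^ 2 := by
  rw [← evnorm_sq, ← mul_pow]
  exact pow_le_pow_left₀ (mul_nonneg hσ (Real.sqrt_nonneg _)) (hsing v) 2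

lemma sq_le_of_forall_mul_evnorm_le (hn : n ≠ 0) (ha : ∀ r, evnorm (a r) = 1) (hσ : 0 ≤ σ)
    (hsing : ∀ v : Fin n → ℂ, σ * evnorm v ≤ evnorm (fun r => hinner (a r) v)) :
    σ ^ 2 ≤ m := by
  set e : EuclideanSpace ℂ (Fin n) := EuclideanSpace.single ⟨0, Nat.pos_of_ne_zero hn⟩ 1
  have he : evnorm e.ofLp = 1 := by simp [evnorm_eq_norm_toLp, e]
  have hcoeff : ∀ r, ‖hinner (a r) e.ofLp‖ ^ 2 ≤ 1 := fun r => by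
    have h := norm_inner_le_norm (𝕜 := ℂ) (WithLp.toLp 2 (a r)) e
    rw [← evnorm_eq_norm_toLp, ha r, one_mul, ← evnorm_eq_norm_toLp, he] at h
    rw [hinner_eq_inner_toLp]
    exact pow_le_one₀ (norm_nonneg _) h
  calc σ ^ 2 = σ ^ 2 * evnorm e.ofLp ^ 2 := by rw [he]; ring
    _ ≤ ∑ r, ‖hinner (a r) e.ofLp‖ ^ 2 := sq_mul_evnorm_sq_le_sum hσ hsing _
    _ ≤ ∑ _r : Fin m, 1 := Finset.sum_le_sum fun r _ => hcoeff r
    _ = m := by simp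

lemma sum_pdist_kaczmarz_step_sq_le (ha : ∀ r, evnorm (a r) = 1) (hσ : 0 ≤ σ)
    (hsing : ∀ v : Fin n → ℂ, σ * evnorm v ≤ evnorm (fun r => hinner (a r) v))
    {xhat : Fin n → ℂ} {S : ℝ} (hS : ∀ r, ‖hinner (a r) xhat‖ ^ 2 ≤ S) (x : Fin n → ℂ) :
    ∑ r, pdist (x + ((‖hinner (a r) xhat‖ : ℂ) * phase (hinner (a r) x) - hinner (a r) x) • a r)
        xhat ^ 2 ≤ (m - σ ^ 2) * pdist x xhat ^ 2 + 4 * m * S := by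
  obtain ⟨ω, hω, hpd⟩ := exists_pdist_eq_evnorm x xhat
  set u := x - ω • xhat
  have hu := sq_mul_evnorm_sq_le_sum hσ hsing u
  calc _ ≤ ∑ r, (evnorm u ^ 2 - ‖hinner (a r) u‖ ^ 2 + 4 * S) :=
        Finset.sum_le_sum fun r _ =>
          (pdist_kaczmarz_step_sq_le (ha r) x xhat hω).trans (by linarith [hS r])
    _ = m * evnorm u ^ 2 - ∑ r, ‖hinner (a r) u‖ ^ 2 + 4 * m * S := by
        simp only [Finset.sum_add_distrib, Finset.sum_sub_distrib, Finset.sum_const,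
          Finset.card_univ, Fintype.card_fin, nsmul_eq_mul]
        ring
    _ ≤ _ := by rw [hpd]; linarith

end LowerFrameBound

lemma Fintype.sum_fin_succ_pi {ι M : Type*} [Fintype ι] [AddCommMonoid M] {l : ℕ}
    (f : (Fin (l + 1) → ι) → M) :
    ∑ seq, f seq = ∑ r, ∑ seq : Fin l → ι, f (Fin.cons r seq) := by
  rw [← Fintype.sum_prod_type']
  exact (Fintype.sum_equiv (Fin.consEquiv fun _ => ι) _ _ fun _ => rfl).symm

lemma sum_foldl_ofFn_le {α ι : Type*} [Fintype ι] (step : α → ι → α) (f : α → ℝ) {q c : ℝ}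
    (hq : 0 ≤ q) (hstep : ∀ x, ∑ r, f (step x r) ≤ Fintype.card ι * (q * f x + c)) (l : ℕ)
    (x : α) :
    ∑ seq : Fin l → ι, f ((List.ofFn seq).foldl step x) ≤
      Fintype.card ι ^ l * (q ^ l * f x + c * ∑ k ∈ Finset.range l, q ^ k) := by
  induction l generalizing x with
  | zero => simp
  | succ l ih =>
    set N : ℝ := (Fintype.card ι : ℝ)
    set G := ∑ k ∈ Finset.range l, q ^ k
    rw [Fintype.sum_fin_succ_pi]
    simp only [List.ofFn_succ, Fin.cons_zero, Fin.cons_succ, List.foldl_cons]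
    calc _ ≤ ∑ r, N ^ l * (q ^ l * f (step x r) + c * G) := Finset.sum_le_sum fun r _ => ih _
      _ = N ^ l * (q ^ l * ∑ r, f (step x r) + N * (c * G)) := by
        rw [← Finset.mul_sum, Finset.sum_add_distrib, ← Finset.mul_sum, Finset.sum_const,
          Finset.card_univ, nsmul_eq_mul]
      _ ≤ N ^ l * (q ^ l * (N * (q * f x + c)) + N * (c * G)) := by gcongr; exact hstep x
      _ = _ := by rw [geom_sum_succ']; ring

lemma one_div_card_pow_mul_sum_foldl_ofFn_le {α ι : Type*} [Fintype ι] [Nonempty ι]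
    (step : α → ι → α) (f : α → ℝ) {q c : ℝ} (hq : 0 ≤ q) (hq1 : q < 1) (hc : 0 ≤ c)
    (hstep : ∀ x, ∑ r, f (step x r) ≤ Fintype.card ι * (q * f x + c)) (l : ℕ) (x : α) :
    1 / (Fintype.card ι : ℝ) ^ l * ∑ seq : Fin l → ι, f ((List.ofFn seq).foldl step x) ≤
      q ^ l * f x + c / (1 - q) := by
  have hgeo : ∑ k ∈ Finset.range l, q ^ k ≤ 1 / (1 - q) := by
    simpa using geom_sum_Ico_le_of_lt_one (m := 0) (n := l) hq hq1
  rw [one_div_mul_eq_div, div_le_iff₀ (by positivity)]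
  calc _ ≤ _ := sum_foldl_ofFn_le step f hq hstep l x
    _ ≤ (Fintype.card ι : ℝ) ^ l * (q ^ l * f x + c * (1 / (1 - q))) := by gcongr
    _ = _ := by ring

/-- Convergence of the randomized simple Kaczmarz method for phase
retrieval with uniform row selection; the expectation is the uniform average over
all index sequences of length l. -/
theorem stmt11 {m n : ℕ} (a : Fin m → Fin n → ℂ) (ha : ∀ r, evnorm (a r) = 1)
    (xhat : Fin n → ℂ) (y : Fin m → ℝ)
    (hy : ∀ r, y r = ‖hinner (a r) xhat‖ ^ 2)
    (σ : ℝ) (hσ : 0 < σ)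
    (hsing : ∀ v : Fin n → ℂ, σ * evnorm v ≤ evnorm (fun r => hinner (a r) v))
    (x0 : Fin n → ℂ)
    (step : (Fin n → ℂ) → Fin m → (Fin n → ℂ))
    (hstep : ∀ (x : Fin n → ℂ) (r : Fin m), step x r =
      x + ((Real.sqrt (y r) : ℂ) * phase (hinner (a r) x) - hinner (a r) x) • a r) :
    ∀ l : ℕ,
      (1 / (m : ℝ) ^ l) * ∑ seq : Fin l → Fin m,
          pdist ((List.ofFn seq).foldl step x0) xhat ^ 2 ≤
        (1 - σ ^ 2 / (m : ℝ)) ^ l * pdist x0 xhat ^ 2 +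
          (4 * (m : ℝ) / σ ^ 2) * ⨆ r, y r := by
  intro l
  have hy0 : ∀ r, 0 ≤ y r := fun r => hy r ▸ sq_nonneg _
  have hS0 : 0 ≤ ⨆ r, y r := Real.iSup_nonneg hy0
  rcases Nat.eq_zero_or_pos n with rfl | hn
  · have hzero : ∀ x : Fin 0 → ℂ, pdist x xhat = 0 := fun x => by
      rw [Subsingleton.elim x xhat, pdist_self]
    simp only [hzero, zero_pow two_ne_zero, Finset.sum_const_zero, mul_zero, zero_add]
    positivity
  have hS : ∀ r, ‖hinner (a r) xhat‖ ^ 2 ≤ ⨆ r, y r := fun r => by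
    rw [← hy r]; exact le_ciSup (Set.finite_range y).bddAbove r
  have hσm : σ ^ 2 ≤ m := sq_le_of_forall_mul_evnorm_le hn.ne' ha hσ.le hsing
  have hm : (0 : ℝ) < m := (by positivity : (0 : ℝ) < σ ^ 2).trans_le hσm
  have : Nonempty (Fin m) := ⟨⟨0, by exact_mod_cast hm⟩⟩
  have hsqrt : ∀ r, √(y r) = ‖hinner (a r) xhat‖ := fun r => by
    rw [hy r, Real.sqrt_sq (norm_nonneg _)]
  have hdecay : ∀ x, ∑ r, pdist (step x r) xhat ^ 2 ≤
      Fintype.card (Fin m) * ((1 - σ ^ 2 / m) * pdist x xhat ^ 2 + 4 * ⨆ r, y r) := fun x => by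
    simp only [hstep, hsqrt, Fintype.card_fin]
    refine (sum_pdist_kaczmarz_step_sq_le ha hσ.le hsing hS x).trans_eq ?_
    field_simp
  have hmean := one_div_card_pow_mul_sum_foldl_ofFn_le step (fun x => pdist x xhat ^ 2)
    (by rw [sub_nonneg, div_le_one hm]; exact hσm) (by simp only [sub_lt_self_iff]; positivity)
    (by positivity) hdecay l x0
  rw [Fintype.card_fin] at hmean
  convert hmean using 2
  field_simp
  ring
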